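/- arXiv:2510.16369 — 4 statements merged into one kernel-verified Lean document; each statement's English description precedes it below -/
import Mathlib

section
/- Let β > 0 and γ > 2. Then the complement in ℝ of the set 𝒜(β,γ) has zero h-Hausdorff measure with respect to the gauge function h(t) = (log(1/t))^{-β}. -/
open MeasureTheory ENNReal

/-- The denominator `Qₙ` of the `n`-th convergent of the continued fraction
expansion of a real number `ν`. -/
noncomputable def cfDen (ν : ℝ) (n : ℕ) : ℝ :=
  (GenContFract.of ν).dens n

/-- The set `𝒜(β,γ)` of irrational numbers whose continued-fraction denominators `Qₙ`
satisfy `∑ₙ (log Q_{n+1})^β / Qₙ^γ < ∞`. -/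
noncomputable def ASet (β γ : ℝ) : Set ℝ :=
  {ν | Irrational ν ∧
    Summable (fun n : ℕ => (Real.log (cfDen ν (n + 1))) ^ β / (cfDen ν n) ^ γ)}

/-- The `h`-Hausdorff measure on `ℝ` associated to the gauge function
`h(t) = (log (1/t))^(-σ)`. -/
noncomputable def logGaugeMeasure (σ : ℝ) : Measure ℝ :=
  Measure.mkMetric (fun t : ℝ≥0∞ => ENNReal.ofReal ((Real.log (1 / t.toReal)) ^ (-σ)))

namespace CapacityAux

open GenContFract


open GenContFract

lemma not_terminatedAt {v : ℝ} (hv : Irrational v) (n : ℕ) :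
    ¬(GenContFract.of v).TerminatedAt n := by
  intro h
  obtain ⟨q, rfl⟩ := (GenContFract.terminates_iff_rat v).mp ⟨n, h⟩
  exact hv ⟨q, rfl⟩

lemma fib_le_den {v : ℝ} (hv : Irrational v) (n : ℕ) :
    (Nat.fib (n + 1) : ℝ) ≤ (GenContFract.of v).dens n :=
  GenContFract.succ_nth_fib_le_of_nth_den (Or.inr (not_terminatedAt hv _))

lemma one_le_den {v : ℝ} (hv : Irrational v) (n : ℕ) :
    (1 : ℝ) ≤ (GenContFract.of v).dens n := by
  refine le_trans ?_ (fib_le_den hv n)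
  exact_mod_cast Nat.one_le_iff_ne_zero.mpr (Nat.fib_pos.mpr n.succ_pos).ne'

lemma exists_int_contsAux (v : ℝ) : ∀ n : ℕ, ∃ a b : ℤ,
    ((GenContFract.of v).contsAux n).a = (a : ℝ) ∧
    ((GenContFract.of v).contsAux n).b = (b : ℝ)
  | 0 => ⟨1, 0, by simp [GenContFract.contsAux], by simp [GenContFract.contsAux]⟩
  | 1 => ⟨⌊v⌋, 1, by simp [GenContFract.contsAux, GenContFract.of_h_eq_floor],
      by simp [GenContFract.contsAux]⟩
  | (n + 2) => by
    obtain ⟨a2, b2, ha2, hb2⟩ := exists_int_contsAux v n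
    obtain ⟨a1, b1, ha1, hb1⟩ := exists_int_contsAux v (n + 1)
    cases hs : (GenContFract.of v).s.get? n with
    | none =>
      refine ⟨a1, b1, ?_, ?_⟩ <;> simp [GenContFract.contsAux, hs, ha1, hb1]
    | some gp =>
      have hga : gp.a = 1 := of_partNum_eq_one (partNum_eq_s_a hs)
      obtain ⟨z, hz⟩ := exists_int_eq_of_partDen (partDen_eq_s_b hs)
      refine ⟨z * a1 + a2, z * b1 + b2, ?_, ?_⟩ <;>
        · simp only [GenContFract.contsAux, hs, GenContFract.nextConts, GenContFract.nextNum,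
            GenContFract.nextDen, hga, hz, ha1, ha2, hb1, hb2]
          push_cast
          ring

lemma exists_int_num (v : ℝ) (n : ℕ) : ∃ p : ℤ, (GenContFract.of v).nums n = (p : ℝ) := by
  obtain ⟨a, b, ha, hb⟩ := exists_int_contsAux v (n + 1)
  exact ⟨a, by rw [num_eq_conts_a, nth_cont_eq_succ_nth_contAux, ha]⟩

lemma exists_nat_den {v : ℝ} (hv : Irrational v) (n : ℕ) :
    ∃ q : ℕ, (GenContFract.of v).dens n = (q : ℝ) := by
  obtain ⟨a, b, ha, hb⟩ := exists_int_contsAux v (n + 1)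
  have hb' : (GenContFract.of v).dens n = (b : ℝ) := by
    rw [den_eq_conts_b, nth_cont_eq_succ_nth_contAux, hb]
  have hb0 : (0 : ℤ) ≤ b := by
    have := one_le_den hv n
    rw [hb'] at this; exact_mod_cast le_trans zero_le_one this
  exact ⟨b.toNat, by rw [hb']; exact_mod_cast (Int.toNat_of_nonneg hb0).symm⟩


lemma sqrt2_pow_le_fib : ∀ n : ℕ, Real.sqrt 2 ^ n ≤ (Nat.fib (n + 2) : ℝ)
  | 0 => by simp
  | 1 => by
    have h2 : Real.sqrt 2 ≤ 2 := by
      nlinarith [Real.sq_sqrt (by norm_num : (2:ℝ) ≥ 0), Real.sqrt_nonneg 2]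
    simpa [Nat.fib] using h2
  | (n + 2) => by
    have h1 := sqrt2_pow_le_fib n
    have h2 := sqrt2_pow_le_fib (n + 1)
    have hfib : (Nat.fib (n + 4) : ℝ) = (Nat.fib (n + 3) : ℝ) + (Nat.fib (n + 2) : ℝ) := by
      have := Nat.fib_add_two (n := n + 2)
      push_cast [this]; ring
    have hsq : Real.sqrt 2 ^ (n + 2) = 2 * Real.sqrt 2 ^ n := by
      rw [pow_add, pow_two, Real.mul_self_sqrt (by norm_num : (0:ℝ) ≤ 2)]; ring
    have hone : (1 : ℝ) ≤ Real.sqrt 2 := by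
      nlinarith [Real.sq_sqrt (by norm_num : (2:ℝ) ≥ 0), Real.sqrt_nonneg 2]
    have hpow : Real.sqrt 2 ^ (n + 1) = Real.sqrt 2 ^ n * Real.sqrt 2 := by rw [pow_succ]
    have hn0 : (0:ℝ) ≤ Real.sqrt 2 ^ n := pow_nonneg (Real.sqrt_nonneg 2) n
    show Real.sqrt 2 ^ (n + 2) ≤ (Nat.fib (n + 2 + 2) : ℝ)
    rw [(by norm_num : n + 2 + 2 = n + 4), hfib, hsq]
    nlinarith

lemma rpow_neg_antitone {x y e : ℝ} (he : 0 < e) (hx : 0 < x) (hxy : x ≤ y) :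
    y ^ (-e) ≤ x ^ (-e) := by
  rw [Real.rpow_neg hx.le, Real.rpow_neg (hx.trans_le hxy).le]
  exact inv_anti₀ (Real.rpow_pos_of_pos hx e) (Real.rpow_le_rpow hx.le hxy he.le)

/-- If the series diverges, then infinitely often `Qₙ^((γ+2)/(2β)) < log Q_{n+1}`. -/
lemma exists_large {v β γ : ℝ} (hv : Irrational v) (hβ : 0 < β) (hγ : 2 < γ)
    (hns : ¬ Summable (fun n : ℕ => (Real.log (cfDen v (n + 1))) ^ β / (cfDen v n) ^ γ))
    (N : ℕ) :
    ∃ n, N ≤ n ∧ (cfDen v n) ^ ((γ + 2) / (2 * β)) < Real.log (cfDen v (n + 1)) := by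
  by_contra hcon
  push_neg at hcon
  apply hns
  set r : ℝ := Real.sqrt 2 ^ (-((γ - 2) / 2)) with hr
  have hone : (1 : ℝ) < Real.sqrt 2 := by
    nlinarith [Real.sq_sqrt (by norm_num : (2:ℝ) ≥ 0), Real.sqrt_nonneg 2]
  have hδ : (0:ℝ) < (γ - 2) / 2 := by linarith
  have hr1 : r < 1 := Real.rpow_lt_one_of_one_lt_of_neg hone (by linarith)
  have hr0 : 0 ≤ r := Real.rpow_nonneg (Real.sqrt_nonneg 2) _
  rw [← summable_nat_add_iff (N + 1)]
  refine Summable.of_nonneg_of_le (fun n => ?_) (fun n => ?_)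
    (summable_geometric_of_lt_one hr0 hr1)
  · have h1 : (1:ℝ) ≤ cfDen v (n + (N + 1) + 1) := one_le_den hv _
    exact div_nonneg (Real.rpow_nonneg (Real.log_nonneg h1) β)
      (Real.rpow_nonneg (le_trans zero_le_one (one_le_den hv _)) γ)
  · set m := n + (N + 1) with hm
    have hQ1 : (1:ℝ) ≤ cfDen v m := one_le_den hv m
    have hQ0 : (0:ℝ) < cfDen v m := lt_of_lt_of_le one_pos hQ1
    have hlogs : Real.log (cfDen v (m + 1)) ≤ (cfDen v m) ^ ((γ + 2) / (2 * β)) :=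
      hcon m (by omega)
    have hlog0 : 0 ≤ Real.log (cfDen v (m + 1)) := Real.log_nonneg (one_le_den hv _)
    have step1 : (Real.log (cfDen v (m + 1))) ^ β / (cfDen v m) ^ γ ≤
        (cfDen v m) ^ ((γ + 2) / (2 * β) * β) / (cfDen v m) ^ γ := by
      rw [Real.rpow_mul (le_of_lt hQ0)]
      have hnum : (Real.log (cfDen v (m + 1))) ^ β ≤ ((cfDen v m) ^ ((γ + 2) / (2 * β))) ^ β :=
        Real.rpow_le_rpow hlog0 hlogs hβ.le
      gcongr
    have hexp : (γ + 2) / (2 * β) * β = (γ + 2) / 2 := by field_simp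
    have step2 : (cfDen v m) ^ ((γ + 2) / (2 * β) * β) / (cfDen v m) ^ γ =
        (cfDen v m) ^ (-((γ - 2) / 2)) := by
      rw [hexp, ← Real.rpow_sub hQ0]
      ring_nf
    have hfib : Real.sqrt 2 ^ n ≤ cfDen v m := by
      refine le_trans ?_ (fib_le_den hv m)
      refine le_trans (sqrt2_pow_le_fib n) ?_
      exact_mod_cast Nat.cast_le.mpr (Nat.fib_mono (by omega))
    have hspos : (0:ℝ) < Real.sqrt 2 ^ n := pow_pos (by linarith) n
    have step3 : (cfDen v m) ^ (-((γ - 2) / 2)) ≤ (Real.sqrt 2 ^ n) ^ (-((γ - 2) / 2)) :=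
      rpow_neg_antitone hδ hspos hfib
    have step4 : (Real.sqrt 2 ^ n) ^ (-((γ - 2) / 2)) = r ^ n := by
      rw [← Real.rpow_natCast (Real.sqrt 2) n, ← Real.rpow_mul (Real.sqrt_nonneg 2),
        mul_comm, Real.rpow_mul (Real.sqrt_nonneg 2), Real.rpow_natCast]
    calc (Real.log (cfDen v (m + 1))) ^ β / (cfDen v m) ^ γ
        ≤ (cfDen v m) ^ ((γ + 2) / (2 * β) * β) / (cfDen v m) ^ γ := step1
      _ = (cfDen v m) ^ (-((γ - 2) / 2)) := step2
      _ ≤ (Real.sqrt 2 ^ n) ^ (-((γ - 2) / 2)) := step3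
      _ = r ^ n := step4

/-- Every point of the complement admits good rational approximations with
arbitrarily large denominator. -/
lemma exists_rat_approx {β γ : ℝ} (hβ : 0 < β) (hγ : 2 < γ) {v : ℝ}
    (hv : v ∈ (ASet β γ)ᶜ) (N : ℕ) :
    ∃ (p : ℤ) (q : ℕ), N + 1 ≤ q ∧
      |v - (p : ℝ) / (q : ℝ)| ≤ Real.exp (-(q : ℝ) ^ ((γ + 2) / (2 * β))) := by
  by_cases hirr : Irrational v
  · have hns : ¬ Summable (fun n : ℕ =>
        (Real.log (cfDen v (n + 1))) ^ β / (cfDen v n) ^ γ) := by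
      intro hs; exact hv ⟨hirr, hs⟩
    obtain ⟨n, hnN, hlarge⟩ := exists_large hirr hβ hγ hns (N + 4)
    obtain ⟨q, hq⟩ := exists_nat_den hirr n
    obtain ⟨p, hp⟩ := exists_int_num v n
    have hn4 : 4 ≤ n := by omega
    have hqN : N + 1 ≤ q := by
      have h1n : n + 1 ≤ Nat.fib (n + 1) := Nat.le_fib_self (by omega)
      have h1 : ((n : ℝ) + 1) ≤ (Nat.fib (n + 1) : ℝ) := by exact_mod_cast h1n
      have h2 : ((n : ℝ) + 1) ≤ (q : ℝ) := by
        rw [← hq]; exact h1.trans (fib_le_den hirr n)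
      have : ((N : ℝ) + 1) ≤ (q : ℝ) := by
        have : ((N : ℝ) + 1) ≤ (n : ℝ) + 1 := by
          have : (N : ℝ) ≤ (n : ℝ) := by exact_mod_cast (by omega : N ≤ n)
          linarith
        linarith
      exact_mod_cast this
    refine ⟨p, q, hqN, ?_⟩
    have hQ1 : (1 : ℝ) ≤ cfDen v n := one_le_den hirr n
    have hQ'0 : (0 : ℝ) < cfDen v (n + 1) := lt_of_lt_of_le one_pos (one_le_den hirr _)
    have hconv : (GenContFract.of v).convs n = (p : ℝ) / (q : ℝ) := by
      rw [GenContFract.conv_eq_num_div_den, hp, ← hq]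
    have habs := GenContFract.abs_sub_convs_le (not_terminatedAt hirr n) (v := v)
    rw [hconv] at habs
    have hexp_lt : Real.exp ((cfDen v n) ^ ((γ + 2) / (2 * β))) ≤ cfDen v (n + 1) := by
      rw [← Real.exp_log hQ'0]
      exact Real.exp_le_exp.mpr hlarge.le
    have hQprod : (1 : ℝ) / ((GenContFract.of v).dens n * (GenContFract.of v).dens (n + 1)) ≤
        Real.exp (-(q : ℝ) ^ ((γ + 2) / (2 * β))) := by
      have h1 : Real.exp ((q : ℝ) ^ ((γ + 2) / (2 * β))) ≤
          (GenContFract.of v).dens n * (GenContFract.of v).dens (n + 1) := by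
        have : Real.exp ((q : ℝ) ^ ((γ + 2) / (2 * β))) ≤ (GenContFract.of v).dens (n + 1) := by
          have : (q : ℝ) = cfDen v n := hq.symm
          rw [this]; exact hexp_lt
        calc Real.exp ((q : ℝ) ^ ((γ + 2) / (2 * β)))
            ≤ (GenContFract.of v).dens (n + 1) := this
          _ ≤ (GenContFract.of v).dens n * (GenContFract.of v).dens (n + 1) :=
            le_mul_of_one_le_left (le_trans zero_le_one (one_le_den hirr _)) (one_le_den hirr n)
      rw [Real.exp_neg, ← one_div]
      exact one_div_le_one_div_of_le (Real.exp_pos _) h1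
    exact habs.trans hQprod
  · rw [Set.mem_compl_iff] at hv
    have : ¬ (v ∉ Set.range ((↑) : ℚ → ℝ)) := hirr
    rw [not_not] at this
    obtain ⟨x, rfl⟩ := this
    refine ⟨x.num * (N + 1), x.den * (N + 1), Nat.le_mul_of_pos_left (N + 1) x.pos, ?_⟩
    have hden : ((x.den * (N + 1) : ℕ) : ℝ) ≠ 0 := by positivity
    have : ((x.num * ((N : ℤ) + 1) : ℤ) : ℝ) / ((x.den * (N + 1) : ℕ) : ℝ) = (x : ℝ) := by
      push_cast
      rw [mul_div_mul_right _ _ (by positivity : ((N : ℝ) + 1) ≠ 0)]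
      exact (Rat.cast_def x).symm
    rw [show ((x.num * ((N : ℕ) + 1) : ℤ) : ℝ) / ((x.den * (N + 1) : ℕ) : ℝ) = (x : ℝ) by
      exact_mod_cast this]
    simp [Real.exp_nonneg]


noncomputable def rad (c : ℝ) (q : ℕ) : ℝ := Real.exp (-(q : ℝ) ^ c)

lemma rad_pos (c : ℝ) (q : ℕ) : 0 < rad c q := Real.exp_pos _

lemma rad_le_one (c : ℝ) (q : ℕ) : rad c q ≤ 1 :=
  Real.exp_le_one_iff.mpr (neg_nonpos.mpr (Real.rpow_nonneg (Nat.cast_nonneg q) c))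

/-- The covering sets. -/
noncomputable def tset (c : ℝ) (k : ℤ) (N : ℕ) (i : ℕ × ℕ) : Set ℝ :=
  if i.2 ≤ 3 * (N + 1 + i.1) then
    Set.Icc ((k : ℝ) - 1 + (i.2 : ℝ) / ((N + 1 + i.1 : ℕ) : ℝ) - rad c (N + 1 + i.1))
            ((k : ℝ) - 1 + (i.2 : ℝ) / ((N + 1 + i.1 : ℕ) : ℝ) + rad c (N + 1 + i.1))
  else ∅

lemma cover {β γ : ℝ} (hβ : 0 < β) (hγ : 2 < γ) (k : ℤ) (N : ℕ) :
    (ASet β γ)ᶜ ∩ Set.Icc (k : ℝ) ((k : ℝ) + 1) ⊆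
      ⋃ i : ℕ × ℕ, tset ((γ + 2) / (2 * β)) k N i := by
  set c := (γ + 2) / (2 * β) with hc
  rintro ν ⟨hν, hk1, hk2⟩
  obtain ⟨p, q, hq, happ⟩ := exists_rat_approx hβ hγ hν N
  have hq1 : 1 ≤ q := by omega
  have hQ0 : (0 : ℝ) < (q : ℝ) := by exact_mod_cast hq1
  have hclose : |ν - (p : ℝ) / (q : ℝ)| ≤ 1 := happ.trans (rad_le_one c q)
  have habs := abs_le.mp hclose
  have hlowR : (k : ℝ) - 1 ≤ (p : ℝ) / (q : ℝ) := by linarith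
  have hhighR : (p : ℝ) / (q : ℝ) ≤ (k : ℝ) + 2 := by linarith
  have hlow : (q : ℤ) * (k - 1) ≤ p := by
    have h1 := (le_div_iff₀ hQ0).mp hlowR
    have h2 : (((q : ℤ) * (k - 1) : ℤ) : ℝ) ≤ ((p : ℤ) : ℝ) := by push_cast; linarith
    exact_mod_cast h2
  have hhigh : p ≤ (q : ℤ) * (k + 2) := by
    have h1 := (div_le_iff₀ hQ0).mp hhighR
    have h2 : ((p : ℤ) : ℝ) ≤ (((q : ℤ) * (k + 2) : ℤ) : ℝ) := by push_cast; linarith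
    exact_mod_cast h2
  set J : ℤ := p - (q : ℤ) * (k - 1) with hJ
  have hJ0 : 0 ≤ J := by omega
  have hJ3 : J ≤ 3 * (q : ℤ) := by
    have : (q : ℤ) * (k + 2) - (q : ℤ) * (k - 1) = 3 * q := by ring
    omega
  refine Set.mem_iUnion.mpr ⟨(q - (N + 1), J.toNat), ?_⟩
  have hqq : N + 1 + (q - (N + 1)) = q := by omega
  have hjle : J.toNat ≤ 3 * q := Int.toNat_le.mpr (by exact_mod_cast hJ3)
  have hJcast : ((J.toNat : ℕ) : ℝ) = (p : ℝ) - (q : ℝ) * ((k : ℝ) - 1) := by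
    have h2 : ((J.toNat : ℤ) : ℝ) = ((J : ℤ) : ℝ) := by rw [Int.toNat_of_nonneg hJ0]
    push_cast at h2
    rw [h2, hJ]
    push_cast
    ring
  have hcenter : (k : ℝ) - 1 + ((J.toNat : ℕ) : ℝ) / (q : ℝ) = (p : ℝ) / (q : ℝ) := by
    rw [hJcast]; field_simp; ring
  have hrad : rad c q = Real.exp (-(q : ℝ) ^ ((γ + 2) / (2 * β))) := rfl
  have habs2 := abs_le.mp happ
  rw [tset]
  simp only [hqq]
  rw [if_pos hjle, hcenter, Set.mem_Icc]
  constructor <;> [linarith [habs2.2]; linarith [habs2.1]]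


/-- The gauge function. -/
noncomputable def  mg (β : ℝ) : ℝ≥0∞ → ℝ≥0∞ :=
  fun t : ℝ≥0∞ => ENNReal.ofReal ((Real.log (1 / t.toReal)) ^ (-β))

lemma mg_zero {β : ℝ} (hβ : 0 < β) : mg β 0 = 0 := by
  rw [mg]
  norm_num [Real.log_zero, Real.zero_rpow (neg_ne_zero.mpr hβ.ne')]

/-- The dominating summable sequence. -/
noncomputable def FF (β γ : ℝ) (q : ℕ) : ℝ≥0∞ :=
  ENNReal.ofReal (4 * 2 ^ β * (q : ℝ) ^ (-(γ / 2)))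

lemma sum_bound {β γ : ℝ} (hβ : 0 < β) (hγ : 2 < γ) (k : ℤ) (N : ℕ)
    (hN : 2 ≤ ((N + 1 : ℕ) : ℝ) ^ ((γ + 2) / (2 * β))) :
    ∑' i : ℕ × ℕ, mg β (EMetric.diam (tset ((γ + 2) / (2 * β)) k N i)) ≤
      ∑' q' : ℕ, FF β γ (q' + (N + 1)) := by
  set c := (γ + 2) / (2 * β) with hc
  have hcβ : c * (-β) = -((γ + 2) / 2) := by
    rw [hc]; field_simp
  refine le_trans (le_of_eq (ENNReal.tsum_prod
    (f := fun a b => mg β (EMetric.diam (tset c k N (a, b)))))) ?_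
  refine ENNReal.tsum_le_tsum fun q' => ?_
  set q : ℕ := N + 1 + q' with hqdef
  have hq1 : 1 ≤ q := by omega
  have hQ0 : (0 : ℝ) < (q : ℝ) := by exact_mod_cast hq1
  have hQ1 : (1 : ℝ) ≤ (q : ℝ) := by exact_mod_cast hq1
  have hQc2 : (2 : ℝ) ≤ (q : ℝ) ^ c := by
    refine hN.trans (Real.rpow_le_rpow (by positivity) ?_ (by positivity))
    exact_mod_cast Nat.le.intro rfl
  set B : ℝ≥0∞ := ENNReal.ofReal (2 ^ β * (q : ℝ) ^ (-((γ + 2) / 2))) with hB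
  have key : ∀ j : ℕ, mg β (EMetric.diam (tset c k N (q', j))) ≤
      if j ≤ 3 * q then B else 0 := by
    intro j
    by_cases hj : j ≤ 3 * q
    · rw [if_pos hj, tset]
      simp only [← hqdef, hj, if_true]
      rw [show (EMetric.diam : Set ℝ → ℝ≥0∞) = Metric.ediam from rfl, Real.ediam_Icc]
      have hrpos := rad_pos c q
      have harith : (k : ℝ) - 1 + (j : ℝ) / (q : ℝ) + rad c q -
          ((k : ℝ) - 1 + (j : ℝ) / (q : ℝ) - rad c q) = 2 * rad c q := by ring
      rw [harith, mg]
      rw [ENNReal.toReal_ofReal (by positivity)]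
      have hlog : Real.log (1 / (2 * rad c q)) = (q : ℝ) ^ c - Real.log 2 := by
        rw [one_div, Real.log_inv, Real.log_mul (by norm_num) hrpos.ne', rad, Real.log_exp]
        ring
      rw [hlog]
      refine ENNReal.ofReal_le_ofReal ?_
      have hlog2 : Real.log 2 ≤ 1 := by
        have := Real.log_le_sub_one_of_pos (by norm_num : (0:ℝ) < 2)
        linarith
      have hL2 : (q : ℝ) ^ c / 2 ≤ (q : ℝ) ^ c - Real.log 2 := by linarith
      have hLpos : (0 : ℝ) < (q : ℝ) ^ c / 2 := by linarith
      refine (rpow_neg_antitone hβ hLpos hL2).trans_eq ?_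
      rw [Real.div_rpow (Real.rpow_nonneg hQ0.le c) (by norm_num : (0:ℝ) ≤ 2)]
      rw [Real.rpow_neg (by norm_num : (0:ℝ) ≤ 2), div_inv_eq_mul]
      rw [← Real.rpow_mul hQ0.le, hcβ]
      ring
    · rw [if_neg hj, tset]
      simp only [← hqdef, hj, if_false]
      rw [show (EMetric.diam : Set ℝ → ℝ≥0∞) = Metric.ediam from rfl, Metric.ediam_empty, mg_zero hβ]
  calc ∑' j : ℕ, mg β (EMetric.diam (tset c k N (q', j)))
      ≤ ∑' j : ℕ, (if j ≤ 3 * q then B else 0) := ENNReal.tsum_le_tsum key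
    _ = ∑ j ∈ Finset.range (3 * q + 1), (if j ≤ 3 * q then B else 0) := by
        refine tsum_eq_sum fun j hj => ?_
        rw [Finset.mem_range, not_lt] at hj
        rw [if_neg (by omega)]
    _ = (3 * q + 1 : ℕ) * B := by
        rw [Finset.sum_ite_of_true (fun j hj => by
          rw [Finset.mem_range] at hj; omega)]
        rw [Finset.sum_const, Finset.card_range, nsmul_eq_mul]
    _ ≤ FF β γ (q' + (N + 1)) := by
        have hqq' : q' + (N + 1) = q := by omega
        rw [hqq', FF, hB]
        rw [← ENNReal.ofReal_natCast, ← ENNReal.ofReal_mul (by positivity)]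
        refine ENNReal.ofReal_le_ofReal ?_
        have hQQ : (q : ℝ) * (q : ℝ) ^ (-((γ + 2) / 2)) = (q : ℝ) ^ (-(γ / 2)) := by
          calc (q : ℝ) * (q : ℝ) ^ (-((γ + 2) / 2))
              = (q : ℝ) ^ (1 : ℝ) * (q : ℝ) ^ (-((γ + 2) / 2)) := by rw [Real.rpow_one]
            _ = (q : ℝ) ^ (1 + -((γ + 2) / 2)) := (Real.rpow_add hQ0 _ _).symm
            _ = (q : ℝ) ^ (-(γ / 2)) := by congr 1; ring
        have h34 : ((3 * q + 1 : ℕ) : ℝ) ≤ 4 * (q : ℝ) := by push_cast; linarith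
        have hA0 : (0 : ℝ) ≤ (q : ℝ) ^ (-((γ + 2) / 2)) := Real.rpow_nonneg hQ0.le _
        have h2β : (0 : ℝ) < 2 ^ β := Real.rpow_pos_of_pos (by norm_num) β
        calc ((3 * q + 1 : ℕ) : ℝ) * (2 ^ β * (q : ℝ) ^ (-((γ + 2) / 2)))
            ≤ 4 * (q : ℝ) * (2 ^ β * (q : ℝ) ^ (-((γ + 2) / 2))) :=
              mul_le_mul_of_nonneg_right h34 (mul_nonneg h2β.le hA0)
          _ = 4 * 2 ^ β * ((q : ℝ) * (q : ℝ) ^ (-((γ + 2) / 2))) := by ring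
          _ = 4 * 2 ^ β * (q : ℝ) ^ (-(γ / 2)) := by rw [hQQ]


lemma FF_tsum_ne_top {β γ : ℝ} (hγ : 2 < γ) : ∑' q : ℕ, FF β γ q ≠ ⊤ := by
  have hsum : Summable (fun q : ℕ => 4 * 2 ^ β * (q : ℝ) ^ (-(γ / 2))) := by
    refine Summable.mul_left _ ?_
    exact Real.summable_nat_rpow.mpr (by linarith)
  have hnonneg : ∀ q : ℕ, 0 ≤ 4 * 2 ^ β * (q : ℝ) ^ (-(γ / 2)) := by
    intro q
    have : (0:ℝ) < 2 ^ β := Real.rpow_pos_of_pos (by norm_num) β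
    positivity
  rw [show (fun q : ℕ => FF β γ q) = fun q : ℕ =>
      ENNReal.ofReal (4 * 2 ^ β * (q : ℝ) ^ (-(γ / 2))) from rfl]
  rw [← ENNReal.ofReal_tsum_of_nonneg hnonneg hsum]
  exact ENNReal.ofReal_ne_top

lemma FF_tendsto {β γ : ℝ} (hγ : 2 < γ) :
    Filter.Tendsto (fun N : ℕ => ∑' q' : ℕ, FF β γ (q' + (N + 1))) Filter.atTop (nhds 0) :=
  (ENNReal.tendsto_sum_nat_add _ (FF_tsum_ne_top hγ)).comp (Filter.tendsto_add_atTop_nat 1)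

lemma natcast_rpow_tendsto {c : ℝ} (hc : 0 < c) :
    Filter.Tendsto (fun N : ℕ => ((N + 1 : ℕ) : ℝ) ^ c) Filter.atTop Filter.atTop :=
  (tendsto_rpow_atTop hc).comp
    (tendsto_natCast_atTop_atTop.comp (Filter.tendsto_add_atTop_nat 1))

lemma piece {β γ : ℝ} (hβ : 0 < β) (hγ : 2 < γ) (k : ℤ) :
    Measure.mkMetric (mg β) ((ASet β γ)ᶜ ∩ Set.Icc (k : ℝ) ((k : ℝ) + 1)) = 0 := by
  set c := (γ + 2) / (2 * β) with hc
  have hcpos : 0 < c := by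
    rw [hc]; positivity
  have hr : Filter.Tendsto (fun N : ℕ => ENNReal.ofReal (2 * rad c (N + 1)))
      Filter.atTop (nhds 0) := by
    have h3 : Filter.Tendsto (fun N : ℕ => rad c (N + 1)) Filter.atTop (nhds 0) :=
      Real.tendsto_exp_atBot.comp
        ((Filter.tendsto_neg_atTop_atBot).comp (natcast_rpow_tendsto hcpos))
    have h4 : Filter.Tendsto (fun N : ℕ => 2 * rad c (N + 1)) Filter.atTop (nhds 0) := by
      simpa using h3.const_mul (2 : ℝ)
    simpa using ENNReal.tendsto_ofReal h4
  have ht : ∀ N : ℕ, ∀ i : ℕ × ℕ,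
      EMetric.diam (tset c k N i) ≤ ENNReal.ofReal (2 * rad c (N + 1)) := by
    intro N i
    rw [tset]
    split_ifs with hcond
    · rw [show (EMetric.diam : Set ℝ → ℝ≥0∞) = Metric.ediam from rfl, Real.ediam_Icc]
      refine ENNReal.ofReal_le_ofReal ?_
      have harith : (k : ℝ) - 1 + (i.2 : ℝ) / ((N + 1 + i.1 : ℕ) : ℝ) + rad c (N + 1 + i.1) -
          ((k : ℝ) - 1 + (i.2 : ℝ) / ((N + 1 + i.1 : ℕ) : ℝ) - rad c (N + 1 + i.1)) =
          2 * rad c (N + 1 + i.1) := by ring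
      rw [harith]
      have hmono : rad c (N + 1 + i.1) ≤ rad c (N + 1) := by
        rw [rad, rad]
        refine Real.exp_le_exp.mpr (neg_le_neg ?_)
        refine Real.rpow_le_rpow (by positivity) ?_ hcpos.le
        exact_mod_cast Nat.le.intro rfl
      linarith
    · rw [show (EMetric.diam : Set ℝ → ℝ≥0∞) = Metric.ediam from rfl, Metric.ediam_empty]
      exact zero_le
  have hst : ∀ N : ℕ, (ASet β γ)ᶜ ∩ Set.Icc (k : ℝ) ((k : ℝ) + 1) ⊆
      ⋃ i : ℕ × ℕ, tset c k N i := fun N => cover hβ hγ k N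
  have hle := MeasureTheory.Measure.mkMetric_le_liminf_tsum
    (X := ℝ) ((ASet β γ)ᶜ ∩ Set.Icc (k : ℝ) ((k : ℝ) + 1))
    (fun N : ℕ => ENNReal.ofReal (2 * rad c (N + 1))) hr (tset c k)
    (Filter.Eventually.of_forall ht) (Filter.Eventually.of_forall hst) (mg β)
  refine le_antisymm ?_ zero_le
  refine hle.trans ?_
  have hev : ∀ᶠ N : ℕ in Filter.atTop,
      ∑' i : ℕ × ℕ, mg β (EMetric.diam (tset c k N i)) ≤
        ∑' q' : ℕ, FF β γ (q' + (N + 1)) := by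
    have h2 := (natcast_rpow_tendsto hcpos).eventually_ge_atTop 2
    exact h2.mono fun N hN => sum_bound hβ hγ k N hN
  calc Filter.liminf (fun N : ℕ => ∑' i : ℕ × ℕ, mg β (EMetric.diam (tset c k N i)))
        Filter.atTop
      ≤ Filter.liminf (fun N : ℕ => ∑' q' : ℕ, FF β γ (q' + (N + 1))) Filter.atTop :=
        Filter.liminf_le_liminf hev
    _ = 0 := (FF_tendsto hγ).liminf_eq

end CapacityAux

/-- The complement of `𝒜(β,γ)` for `γ > 2` has zero `h`-Hausdorff measure
with gauge `h(t) = (log (1/t))^(-β)`. -/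
theorem capacity_stmt1 (β γ : ℝ) (hβ : 0 < β) (hγ : 2 < γ) :
    logGaugeMeasure β (ASet β γ)ᶜ = 0 := by
  have hsub : (ASet β γ)ᶜ ⊆ ⋃ k : ℤ, (ASet β γ)ᶜ ∩ Set.Icc (k : ℝ) ((k : ℝ) + 1) := by
    intro x hx
    exact Set.mem_iUnion.mpr ⟨⌊x⌋, hx, Int.floor_le x, (Int.lt_floor_add_one x).le⟩
  have hpieces : ∀ k : ℤ,
      logGaugeMeasure β ((ASet β γ)ᶜ ∩ Set.Icc (k : ℝ) ((k : ℝ) + 1)) = 0 := by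
    intro k
    exact CapacityAux.piece hβ hγ k
  exact measure_mono_null hsub (measure_iUnion_null hpieces)
end

section
/- Let ν be an irrational number with continued-fraction denominators Qₙ, let ε > 0, β > 0 and 0 < γ < 2 + ε. If ∑_{n=1}^∞ (log Q_{n+1})^β / Qₙ^γ = +∞, then ∑_{n=1}^∞ (log Q_{n+1})^{β(2+ε)/γ} / Qₙ^{2+ε/4} = +∞. -/
open MeasureTheory ENNReal

lemma cfDen_not_terminated (ν : ℝ) (hν : Irrational ν) (n : ℕ) :
    ¬(GenContFract.of ν).TerminatedAt n := by
  intro h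
  have hterm : (GenContFract.of ν).Terminates := ⟨n, h⟩
  obtain ⟨q, hq⟩ := (GenContFract.terminates_iff_rat ν).mp hterm
  exact hν ⟨q, hq.symm⟩

lemma two_pow_half_le_fib : ∀ n : ℕ, 2 ^ (n / 2) ≤ Nat.fib (n + 1) := by
  intro n
  induction n using Nat.strong_induction_on with
  | _ n ih =>
    match n with
    | 0 => simp
    | 1 => simp
    | (m + 2) =>
      have h1 : 2 ^ (m / 2) ≤ Nat.fib (m + 1) := ih m (by omega)
      have h2 : Nat.fib (m + 1) ≤ Nat.fib (m + 2) := Nat.fib_le_fib_succ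
      have h3 : Nat.fib (m + 1 + 2) = Nat.fib (m + 1) + Nat.fib (m + 2) := Nat.fib_add_two
      have h4 : (m + 2) / 2 = m / 2 + 1 := by omega
      rw [h4, pow_succ]
      show 2 ^ (m / 2) * 2 ≤ Nat.fib (m + 1 + 2)
      omega

lemma le_cfDen (ν : ℝ) (hν : Irrational ν) (n : ℕ) :
    ((2 : ℝ) ^ (n / 2 : ℕ)) ≤ cfDen ν n := by
  have hfib : (Nat.fib (n + 1) : ℝ) ≤ (GenContFract.of ν).dens n := by
    apply GenContFract.succ_nth_fib_le_of_nth_den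
    cases n with
    | zero => exact Or.inl rfl
    | succ m => exact Or.inr (cfDen_not_terminated ν hν m)
  calc ((2 : ℝ) ^ (n / 2 : ℕ)) = ((2 ^ (n / 2 : ℕ) : ℕ) : ℝ) := by push_cast; ring
    _ ≤ (Nat.fib (n + 1) : ℝ) := by exact_mod_cast two_pow_half_le_fib n
    _ ≤ cfDen ν n := hfib

lemma one_le_cfDen (ν : ℝ) (hν : Irrational ν) (n : ℕ) : 1 ≤ cfDen ν n := by
  have := le_cfDen ν hν n
  have h1 : (1 : ℝ) ≤ (2 : ℝ) ^ (n / 2 : ℕ) := one_le_pow₀ (by norm_num)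
  linarith

lemma summable_cfDen_rpow_neg (ν : ℝ) (hν : Irrational ν) {δ : ℝ} (hδ : 0 < δ) :
    Summable (fun n : ℕ => cfDen ν n ^ (-δ)) := by
  have hr0 : (0 : ℝ) < (2 : ℝ) ^ (-δ / 2) := Real.rpow_pos_of_pos (by norm_num) _
  have hr1 : (2 : ℝ) ^ (-δ / 2) < 1 :=
    Real.rpow_lt_one_of_one_lt_of_neg (by norm_num) (by linarith)
  have hgeo : Summable (fun n : ℕ => (2 : ℝ) ^ δ * ((2 : ℝ) ^ (-δ / 2)) ^ n) :=
    (summable_geometric_of_lt_one hr0.le hr1).mul_left _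
  apply Summable.of_nonneg_of_le (fun n => Real.rpow_nonneg
    (lt_of_lt_of_le one_pos (one_le_cfDen ν hν n)).le _) _ hgeo
  intro n
  have hQpos : (0 : ℝ) < cfDen ν n := lt_of_lt_of_le one_pos (one_le_cfDen ν hν n)
  have hlow : (2 : ℝ) ^ ((n : ℝ) / 2 - 1) ≤ cfDen ν n := by
    refine le_trans ?_ (le_cfDen ν hν n)
    rw [← Real.rpow_natCast (2 : ℝ) (n / 2)]
    apply Real.rpow_le_rpow_of_exponent_le (by norm_num)
    have : (n : ℝ) ≤ 2 * ((n / 2 : ℕ) : ℝ) + 1 := by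
      have : n ≤ 2 * (n / 2) + 1 := by omega
      exact_mod_cast this
    linarith
  have hbase : (0 : ℝ) < (2 : ℝ) ^ ((n : ℝ) / 2 - 1) := Real.rpow_pos_of_pos (by norm_num) _
  calc cfDen ν n ^ (-δ) ≤ ((2 : ℝ) ^ ((n : ℝ) / 2 - 1)) ^ (-δ) :=
        Real.rpow_le_rpow_of_nonpos hbase hlow (by linarith)
    _ = (2 : ℝ) ^ δ * ((2 : ℝ) ^ (-δ / 2)) ^ n := by
        rw [← Real.rpow_natCast ((2 : ℝ) ^ (-δ / 2)) n,
          ← Real.rpow_mul (by norm_num), ← Real.rpow_mul (by norm_num),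
          ← Real.rpow_add (by norm_num)]
        ring_nf

/-- If `∑ₙ (log Q_{n+1})^β / Qₙ^γ = +∞` with `β > 0` and `0 < γ < 2 + ε`, then
`∑ₙ (log Q_{n+1})^{β(2+ε)/γ} / Qₙ^{2+ε/4} = +∞`. -/
theorem capacity_stmt4 (ν : ℝ) (hν : Irrational ν) (ε β γ : ℝ)
    (hε : 0 < ε) (hβ : 0 < β) (hγ : 0 < γ) (hγ2 : γ < 2 + ε)
    (hdiv : ∑' n : ℕ,
      ENNReal.ofReal ((Real.log (cfDen ν (n + 1))) ^ β / (cfDen ν n) ^ γ) = ⊤) :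
    ∑' n : ℕ,
      ENNReal.ofReal ((Real.log (cfDen ν (n + 1))) ^ (β * (2 + ε) / γ) /
        (cfDen ν n) ^ (2 + ε / 4)) = ⊤ := by
  set p : ℝ := (2 + ε) / γ with hp_def
  have hp1 : 1 < p := (one_lt_div hγ).mpr hγ2
  set δ : ℝ := (3 * ε / 4) / (p - 1) with hδ_def
  have hδ : 0 < δ := div_pos (by linarith) (by linarith)
  set Q : ℕ → ℝ := fun n => cfDen ν n with hQ_def
  set L : ℕ → ℝ := fun n => Real.log (cfDen ν (n + 1)) with hL_def
  set a : ℕ → ℝ := fun n => L n ^ β / Q n ^ γ with ha_def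
  set b : ℕ → ℝ := fun n => L n ^ (β * (2 + ε) / γ) / Q n ^ (2 + ε / 4) with hb_def
  have hQ1 : ∀ n, 1 ≤ Q n := one_le_cfDen ν hν
  have hQpos : ∀ n, 0 < Q n := fun n => lt_of_lt_of_le one_pos (hQ1 n)
  have hL0 : ∀ n, 0 ≤ L n := fun n => Real.log_nonneg (hQ1 (n + 1))
  -- key pointwise bound on the "large" set
  have key : ∀ n : ℕ, Q n ^ (-δ) < a n → a n ≤ b n := by
    intro n hn
    have hQδpos : 0 < Q n ^ (-δ) := Real.rpow_pos_of_pos (hQpos n) _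
    have hapos : 0 < a n := lt_trans hQδpos hn
    have hap : a n ^ p = L n ^ (β * p) / Q n ^ (2 + ε) := by
      have hγp : γ * p = 2 + ε := by
        rw [hp_def]; field_simp
      rw [ha_def]
      rw [Real.div_rpow (Real.rpow_nonneg (hL0 n) _) (Real.rpow_nonneg (hQpos n).le _),
        ← Real.rpow_mul (hL0 n), ← Real.rpow_mul (hQpos n).le, hγp]
    have hb_eq : b n = a n ^ p * Q n ^ (3 * ε / 4) := by
      rw [hap, hb_def]
      have hsplit : Q n ^ (2 + ε) = Q n ^ (2 + ε / 4) * Q n ^ (3 * ε / 4) := by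
        rw [← Real.rpow_add (hQpos n)]; congr 1; ring
      have h2 : Q n ^ (3 * ε / 4) ≠ 0 := (Real.rpow_pos_of_pos (hQpos n) _).ne'
      have hmp : β * (2 + ε) / γ = β * p := by rw [hp_def]; ring
      rw [hmp, hsplit, eq_comm, div_mul_eq_mul_div, mul_comm (Q n ^ (2 + ε / 4)),
        ← div_div, mul_div_assoc, div_self h2, mul_one]
    have hlower : a n * Q n ^ (-(3 * ε / 4)) ≤ a n ^ p := by
      have h1 : a n ^ p = a n ^ (1 : ℝ) * a n ^ (p - 1) := by
        rw [← Real.rpow_add hapos]; ring_nf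
      have h2 : (Q n ^ (-δ)) ^ (p - 1) ≤ a n ^ (p - 1) :=
        Real.rpow_le_rpow hQδpos.le hn.le (by linarith)
      have h3 : (Q n ^ (-δ)) ^ (p - 1) = Q n ^ (-(3 * ε / 4)) := by
        rw [← Real.rpow_mul (hQpos n).le]
        congr 1
        have hpne : p - 1 ≠ 0 := by linarith
        have hd : δ * (p - 1) = 3 * ε / 4 := div_mul_cancel₀ _ hpne
        rw [neg_mul, hd]
      rw [h1, Real.rpow_one]
      rw [h3] at h2
      exact mul_le_mul_of_nonneg_left h2 hapos.le
    calc a n = a n * Q n ^ (-(3 * ε / 4)) * Q n ^ (3 * ε / 4) := by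
          rw [mul_assoc, ← Real.rpow_add (hQpos n)]; simp
      _ ≤ a n ^ p * Q n ^ (3 * ε / 4) := by
          apply mul_le_mul_of_nonneg_right hlower (Real.rpow_nonneg (hQpos n).le _)
      _ = b n := hb_eq.symm
  -- split the divergent sum
  set S : Set ℕ := {n | a n ≤ Q n ^ (-δ)} with hS_def
  have hsplit := Summable.tsum_add_tsum_compl (f := fun n => ENNReal.ofReal (a n)) (s := S)
    ENNReal.summable ENNReal.summable
  have hSfin : ∑' n : S, ENNReal.ofReal (a n) ≠ ⊤ := by
    have hle : ∑' n : S, ENNReal.ofReal (a n) ≤ ∑' n : ℕ, ENNReal.ofReal (Q n ^ (-δ)) := by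
      refine le_trans (ENNReal.tsum_le_tsum (fun n => ?_))
        (ENNReal.tsum_comp_le_tsum_of_injective Subtype.coe_injective
          (fun n => ENNReal.ofReal (Q n ^ (-δ))))
      exact ENNReal.ofReal_le_ofReal n.2
    have hsum : Summable (fun n : ℕ => Q n ^ (-δ)) := summable_cfDen_rpow_neg ν hν hδ
    have : ∑' n : ℕ, ENNReal.ofReal (Q n ^ (-δ)) ≠ ⊤ := by
      rw [← ENNReal.ofReal_tsum_of_nonneg (fun n => Real.rpow_nonneg (hQpos n).le _) hsum]
      exact ENNReal.ofReal_ne_top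
    exact ne_top_of_le_ne_top this hle
  have hScfin : ∑' n : ↥Sᶜ, ENNReal.ofReal (a n) = ⊤ := by
    by_contra h
    rw [← hsplit] at hdiv
    exact (ENNReal.add_ne_top.mpr ⟨hSfin, h⟩) hdiv
  have hfinal : (⊤ : ℝ≥0∞) ≤ ∑' n : ℕ, ENNReal.ofReal (b n) := by
    calc (⊤ : ℝ≥0∞) = ∑' n : ↥Sᶜ, ENNReal.ofReal (a n) := hScfin.symm
      _ ≤ ∑' n : ↥Sᶜ, ENNReal.ofReal (b n) := by
          refine ENNReal.tsum_le_tsum (fun n => ENNReal.ofReal_le_ofReal ?_)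
          exact key n (lt_of_not_ge n.2)
      _ ≤ ∑' n : ℕ, ENNReal.ofReal (b n) :=
          ENNReal.tsum_comp_le_tsum_of_injective Subtype.coe_injective _
  exact top_le_iff.mp hfinal
end

section
/- Let ν be an irrational number with continued-fraction convergents Pₙ/Qₙ, let ε > 0, β > 0 and 0 < γ < 2 + ε. If ∑_{n=1}^∞ (log Q_{n+1})^β / Qₙ^γ = +∞, then ∑_{n=1}^∞ |log|ν − Pₙ/Qₙ||^{β(2+ε)/γ} / Qₙ^{2+ε/4} = +∞. -/
open MeasureTheory ENNReal

/-- The `n`-th convergent `Pₙ/Qₙ` of the continued fraction expansion of `ν`. -/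
noncomputable def cfConv (ν : ℝ) (n : ℕ) : ℝ :=
  (GenContFract.of ν).convs n


lemma two_pow_le_fib_sq : ∀ n : ℕ, 2 ^ n ≤ 2 * (Nat.fib (n + 1)) ^ 2 := by
  intro n
  induction n using Nat.strong_induction_on with
  | _ n ih =>
    match n with
    | 0 => norm_num
    | 1 => norm_num
    | (n+2) =>
      have h := ih n (by omega)
      have hf : Nat.fib (n+1) * 2 ≤ Nat.fib (n+3) := by
        have h1 : Nat.fib (n+3) = Nat.fib (n+2) + Nat.fib (n+1) := by
          have h := Nat.fib_add_two (n := n+1)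
          simp only [show n+1+2 = n+3 from rfl, show n+1+1 = n+2 from rfl] at h
          omega
        have h2 : Nat.fib (n+1) ≤ Nat.fib (n+2) := Nat.fib_le_fib_succ
        omega
      have : 2 ^ (n+2) = 4 * 2 ^ n := by ring
      nlinarith [Nat.fib_pos.2 (show 0 < n+1 by omega)]

/-- If `∑ₙ (log Q_{n+1})^β / Qₙ^γ = +∞` with `β > 0` and `0 < γ < 2 + ε`, then
`∑ₙ |log |ν - Pₙ/Qₙ||^{β(2+ε)/γ} / Qₙ^{2+ε/4} = +∞`. -/
theorem capacity_stmt5 (ν : ℝ) (hν : Irrational ν) (ε β γ : ℝ)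
    (hε : 0 < ε) (hβ : 0 < β) (hγ : 0 < γ) (hγ2 : γ < 2 + ε)
    (hdiv : ∑' n : ℕ,
      ENNReal.ofReal ((Real.log (cfDen ν (n + 1))) ^ β / (cfDen ν n) ^ γ) = ⊤) :
    ∑' n : ℕ,
      ENNReal.ofReal (|Real.log (|ν - cfConv ν n|)| ^ (β * (2 + ε) / γ) /
        (cfDen ν n) ^ (2 + ε / 4)) = ⊤ := by
  -- basic facts
  have hterm : ∀ n, ¬ (GenContFract.of ν).TerminatedAt n := by
    intro n hn
    have hT : (GenContFract.of ν).Terminates := ⟨n, hn⟩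
    obtain ⟨q, hq⟩ := GenContFract.exists_rat_eq_of_terminates hT
    exact hν ⟨q, hq.symm⟩
  have hfib : ∀ n, (Nat.fib (n + 1) : ℝ) ≤ cfDen ν n := by
    intro n
    exact GenContFract.succ_nth_fib_le_of_nth_den (Or.inr (hterm _))
  have hQ1 : ∀ n, (1 : ℝ) ≤ cfDen ν n := by
    intro n
    refine le_trans ?_ (hfib n)
    exact_mod_cast Nat.one_le_iff_ne_zero.2 (Nat.fib_pos.2 (Nat.succ_pos n)).ne'
  have hQpos : ∀ n, (0 : ℝ) < cfDen ν n := fun n => lt_of_lt_of_le one_pos (hQ1 n)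
  have hA : ∀ n, 0 ≤ Real.log (cfDen ν (n + 1)) := fun n => Real.log_nonneg (hQ1 _)
  -- the key pointwise bound: log Q_{n+1} ≤ |log |ν - c_n||
  have hL : ∀ n, Real.log (cfDen ν (n + 1)) ≤ |Real.log (|ν - cfConv ν n|)| := by
    intro n
    have hne : ν ≠ cfConv ν n := by
      obtain ⟨q, hq⟩ := GenContFract.exists_rat_eq_nth_conv ν n
      intro h
      exact hν ⟨q, by rw [h, cfConv, hq]⟩
    have hdpos : 0 < |ν - cfConv ν n| := abs_pos.2 (sub_ne_zero.2 hne)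
    have hdle : |ν - cfConv ν n| ≤ 1 / (cfDen ν n * cfDen ν (n + 1)) :=
      GenContFract.abs_sub_convs_le (hterm n)
    have hdle2 : |ν - cfConv ν n| ≤ 1 / cfDen ν (n + 1) := by
      refine hdle.trans (one_div_le_one_div_of_le (hQpos _) ?_)
      nlinarith [hQ1 n, hQpos (n + 1)]
    have := Real.log_le_log hdpos hdle2
    rw [Real.log_div one_ne_zero (hQpos (n+1)).ne', Real.log_one, zero_sub] at this
    calc Real.log (cfDen ν (n + 1)) ≤ -Real.log (|ν - cfConv ν n|) := by linarith
      _ ≤ |Real.log (|ν - cfConv ν n|)| := neg_le_abs _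
  -- main argument by contradiction
  by_contra hfin
  set p : ℝ := (2 + ε) / γ with hp
  have hp1 : 1 < p := (one_lt_div hγ).2 hγ2
  have hppos : 0 < p := lt_trans one_pos hp1
  set M : ℝ≥0∞ := ∑' n : ℕ,
      ENNReal.ofReal (|Real.log (|ν - cfConv ν n|)| ^ (β * (2 + ε) / γ) /
        (cfDen ν n) ^ (2 + ε / 4)) with hM
  have hMne : M ≠ ⊤ := hfin
  set δ : ℝ := γ - (2 + ε / 4) / p with hδ
  have hδpos : 0 < δ := by
    rw [hδ, hp, sub_pos, div_div_eq_mul_div, div_lt_iff₀ (by positivity)]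
    nlinarith
  set C : ℝ := M.toReal ^ (1 / p) with hC
  have hCnn : 0 ≤ C := Real.rpow_nonneg ENNReal.toReal_nonneg _
  -- pointwise bound on the divergent series' terms
  have key : ∀ n : ℕ, Real.log (cfDen ν (n + 1)) ^ β / cfDen ν n ^ γ
      ≤ C * cfDen ν n ^ (-δ) := by
    intro n
    set A : ℝ := Real.log (cfDen ν (n + 1)) with hAdef
    set q : ℝ := cfDen ν n with hq
    have hAnn : 0 ≤ A := hA n
    have hq0 : 0 < q := hQpos n
    -- term ≤ M
    have h1 : ENNReal.ofReal (A ^ (β * p) / q ^ (2 + ε / 4)) ≤ M := by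
      refine le_trans ?_ (ENNReal.le_tsum n)
      apply ENNReal.ofReal_le_ofReal
      apply div_le_div_of_nonneg_right ?_ (by positivity)
      · rw [show β * (2 + ε) / γ = β * p by rw [hp]; ring]
        exact Real.rpow_le_rpow hAnn (hL n) (by positivity)
    have h2 : A ^ (β * p) ≤ M.toReal * q ^ (2 + ε / 4) := by
      have := (ENNReal.ofReal_le_iff_le_toReal hMne).1 h1
      rw [div_le_iff₀ (by positivity)] at this
      linarith [this]
    -- take p-th roots
    have h3 : A ^ β ≤ C * q ^ ((2 + ε / 4) / p) := by
      have hr : A ^ β = (A ^ (β * p)) ^ (1 / p) := by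
        rw [← Real.rpow_mul hAnn]
        congr 1
        field_simp
      rw [hr]
      calc (A ^ (β * p)) ^ (1 / p)
          ≤ (M.toReal * q ^ (2 + ε / 4)) ^ (1 / p) :=
            Real.rpow_le_rpow (by positivity) h2 (by positivity)
        _ = C * q ^ ((2 + ε / 4) / p) := by
            rw [Real.mul_rpow ENNReal.toReal_nonneg (by positivity),
              ← Real.rpow_mul hq0.le, hC, mul_one_div]
    calc A ^ β / q ^ γ ≤ (C * q ^ ((2 + ε / 4) / p)) / q ^ γ := by
          apply div_le_div_of_nonneg_right h3 (by positivity)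
      _ = C * q ^ (-δ) := by
          rw [hδ, mul_div_assoc, ← Real.rpow_sub hq0]
          congr 1
          ring
  -- geometric majorant for `q_n ^ (-δ)`
  set r : ℝ := (2 : ℝ) ^ (-(δ / 2)) with hrdef
  have hr0 : 0 < r := Real.rpow_pos_of_pos two_pos _
  have hr1 : r < 1 := Real.rpow_lt_one_of_one_lt_of_neg one_lt_two (neg_lt_zero.mpr (half_pos hδpos))
  have hgeo : ∀ n : ℕ, cfDen ν n ^ (-δ) ≤ (2 : ℝ) ^ (δ / 2) * r ^ n := by
    intro n
    have hq0 := hQpos n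
    have h2q : (2 : ℝ) ^ (n : ℕ) ≤ 2 * cfDen ν n ^ (2 : ℕ) := by
      have hcast : ((2 ^ n : ℕ) : ℝ) ≤ ((2 * Nat.fib (n + 1) ^ 2 : ℕ) : ℝ) :=
        Nat.cast_le.2 (two_pow_le_fib_sq n)
      push_cast at hcast
      nlinarith [hfib n, (show (0 : ℝ) ≤ (Nat.fib (n + 1) : ℝ) by positivity)]
    set e : ℝ := (2 : ℝ) ^ (((n : ℝ) - 1) / 2) with hedef
    have he0 : (0 : ℝ) < e := Real.rpow_pos_of_pos two_pos _
    have hesq : e ^ (2 : ℕ) = (2 : ℝ) ^ ((n : ℝ) - 1) := by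
      rw [hedef, ← Real.rpow_natCast ((2:ℝ) ^ (((n : ℝ) - 1) / 2)) 2,
        ← Real.rpow_mul (by norm_num)]
      norm_num
    have heq : e ≤ cfDen ν n := by
      have h1 : e ^ (2 : ℕ) ≤ cfDen ν n ^ (2 : ℕ) := by
        rw [hesq, Real.rpow_sub two_pos, Real.rpow_one, Real.rpow_natCast]
        linarith [h2q]
      calc e = Real.sqrt (e ^ (2:ℕ)) := by rw [Real.sqrt_sq he0.le]  -- pow vs sq
        _ ≤ Real.sqrt (cfDen ν n ^ (2:ℕ)) := Real.sqrt_le_sqrt h1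
        _ = cfDen ν n := by rw [Real.sqrt_sq hq0.le]
    calc cfDen ν n ^ (-δ) ≤ e ^ (-δ) :=
          Real.rpow_le_rpow_of_nonpos he0 heq (by linarith)
      _ = (2 : ℝ) ^ (δ / 2) * r ^ n := by
          rw [hedef, ← Real.rpow_natCast r n, hrdef,
            ← Real.rpow_mul (by norm_num : (0:ℝ) ≤ 2),
            ← Real.rpow_mul (by norm_num : (0:ℝ) ≤ 2),
            ← Real.rpow_add two_pos]
          congr 1
          ring
  have hsum : Summable (fun n : ℕ => C * (2 : ℝ) ^ (δ / 2) * r ^ n) :=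
    (summable_geometric_of_lt_one hr0.le hr1).mul_left _
  have hne : (∑' n : ℕ, ENNReal.ofReal (C * (2 : ℝ) ^ (δ / 2) * r ^ n)) ≠ ⊤ := by
    rw [← ENNReal.ofReal_tsum_of_nonneg (fun n => by positivity) hsum]
    exact ENNReal.ofReal_ne_top
  apply hne
  rw [← top_le_iff, ← hdiv]
  refine ENNReal.tsum_le_tsum fun n => ENNReal.ofReal_le_ofReal ?_
  calc Real.log (cfDen ν (n + 1)) ^ β / cfDen ν n ^ γ ≤ C * cfDen ν n ^ (-δ) := key n
    _ ≤ C * ((2 : ℝ) ^ (δ / 2) * r ^ n) := mul_le_mul_of_nonneg_left (hgeo n) hCnn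
    _ = C * (2 : ℝ) ^ (δ / 2) * r ^ n := by ring
end

section
/- Let ν be an irrational number with continued-fraction convergents Pₙ/Qₙ, and let α ≥ 1. Define Ψ : [1,∞) → (0,∞] piecewise by Ψ(Q) = |ν·Qₙ − Pₙ|^{−1} for Qₙ ≤ Q < Q_{n+1}. If ∑_{n=1}^∞ (log Q_{n+1}) / Qₙ^{1+1/α} = +∞, then ∑_{Q=1}^∞ (log Ψ(Q)) / Q^{1+1/α} = +∞. -/
open MeasureTheory ENNReal

/-- The numerator `Pₙ` of the `n`-th convergent of the continued fraction
expansion of a real number `ν`. -/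
noncomputable def cfNum (ν : ℝ) (n : ℕ) : ℝ :=
  (GenContFract.of ν).nums n

section Aux

variable {ν : ℝ}

lemma cf_of_s_some (hν : Irrational ν) (n : ℕ) :
    ∃ gp : GenContFract.Pair ℝ, (GenContFract.of ν).s.get? n = some gp := by
  have hterm : ¬(GenContFract.of ν).Terminates := by
    rw [GenContFract.terminates_iff_rat]
    rintro ⟨q, rfl⟩
    exact hν ⟨q, rfl⟩
  have h : ¬(GenContFract.of ν).TerminatedAt n := fun h => hterm ⟨n, h⟩
  exact Option.ne_none_iff_exists'.mp h

lemma cf_pair_props (hν : Irrational ν) (n : ℕ) :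
    ∃ (gp : GenContFract.Pair ℝ) (k : ℕ), (GenContFract.of ν).s.get? n = some gp ∧
      gp.a = 1 ∧ gp.b = (k : ℝ) ∧ 1 ≤ k := by
  obtain ⟨gp, hgp⟩ := cf_of_s_some hν n
  have ha := GenContFract.of_partNum_eq_one (GenContFract.partNum_eq_s_a hgp)
  have hb1 : (1 : ℝ) ≤ gp.b :=
    GenContFract.of_one_le_get?_partDen (GenContFract.partDen_eq_s_b hgp)
  obtain ⟨z, hz⟩ := GenContFract.exists_int_eq_of_partDen (GenContFract.partDen_eq_s_b hgp)
  have hz1 : 1 ≤ z := by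
    rw [hz] at hb1; exact_mod_cast hb1
  refine ⟨gp, z.toNat, hgp, ha, ?_, ?_⟩
  · rw [hz]
    rw [show ((z.toNat : ℕ) : ℝ) = ((z.toNat : ℤ) : ℝ) by push_cast; ring,
      Int.toNat_of_nonneg (by omega)]
  · omega

lemma cf_one_le_dens (n : ℕ) : (1 : ℝ) ≤ (GenContFract.of ν).dens n := by
  induction n with
  | zero => rw [GenContFract.zeroth_den_eq_one]
  | succ n ih => exact ih.trans GenContFract.of_den_mono

lemma cf_dens_nat (hν : Irrational ν) (n : ℕ) :
    (∃ q : ℕ, (GenContFract.of ν).dens n = q) ∧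
      ∃ q : ℕ, (GenContFract.of ν).dens (n + 1) = q := by
  induction n with
  | zero =>
    obtain ⟨gp, k, hgp, _, hb, _⟩ := cf_pair_props hν 0
    refine ⟨⟨1, by rw [GenContFract.zeroth_den_eq_one]; norm_num⟩, ⟨k, ?_⟩⟩
    rw [GenContFract.first_den_eq hgp, hb]
  | succ n ih =>
    obtain ⟨⟨q0, h0⟩, ⟨q1, h1⟩⟩ := ih
    refine ⟨⟨q1, h1⟩, ?_⟩
    obtain ⟨gp, k, hgp, ha, hb, _⟩ := cf_pair_props hν (n + 1)
    refine ⟨k * q1 + q0, ?_⟩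
    rw [GenContFract.dens_recurrence hgp h0 h1, ha, hb]
    push_cast
    ring

lemma cf_dens_strict (hν : Irrational ν) (n : ℕ) :
    (GenContFract.of ν).dens (n + 1) < (GenContFract.of ν).dens (n + 2) := by
  obtain ⟨gp, k, hgp, ha, hb, hk⟩ := cf_pair_props hν (n + 1)
  have hb1 : (1 : ℝ) ≤ gp.b := by rw [hb]; exact_mod_cast hk
  have hrec := GenContFract.dens_recurrence hgp rfl rfl
  have h1 := cf_one_le_dens (ν := ν) n
  have h2 := cf_one_le_dens (ν := ν) (n + 1)
  rw [hrec, ha]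
  nlinarith

lemma cf_key_bound (hν : Irrational ν) (n : ℕ) :
    0 < |ν * (GenContFract.of ν).dens n - (GenContFract.of ν).nums n| ∧
    (GenContFract.of ν).dens (n + 1) ≤
      |ν * (GenContFract.of ν).dens n - (GenContFract.of ν).nums n|⁻¹ := by
  have hterm : ¬(GenContFract.of ν).TerminatedAt n := by
    intro h
    have hterm : ¬(GenContFract.of ν).Terminates := by
      rw [GenContFract.terminates_iff_rat]
      rintro ⟨q, rfl⟩
      exact hν ⟨q, rfl⟩
    exact hterm ⟨n, h⟩
  have habs := GenContFract.abs_sub_convs_le hterm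
  have hdn : (1 : ℝ) ≤ (GenContFract.of ν).dens n := cf_one_le_dens n
  have hdn1 : (1 : ℝ) ≤ (GenContFract.of ν).dens (n + 1) := cf_one_le_dens (n + 1)
  rw [GenContFract.conv_eq_num_div_den] at habs
  set D := (GenContFract.of ν).dens n with hD
  set D' := (GenContFract.of ν).dens (n + 1) with hD'
  set P := (GenContFract.of ν).nums n with hP
  have hDpos : (0 : ℝ) < D := lt_of_lt_of_le one_pos hdn
  have hD'pos : (0 : ℝ) < D' := lt_of_lt_of_le one_pos hdn1
  have hsub : ν - P / D = (ν * D - P) / D := by field_simp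
  rw [hsub, abs_div, abs_of_pos hDpos] at habs
  set E := |ν * D - P| with hE
  have hEpos : 0 < E := by
    rw [hE, abs_pos]
    intro h0
    obtain ⟨r, hr⟩ := GenContFract.exists_rat_eq_nth_conv ν n
    rw [GenContFract.conv_eq_num_div_den, ← hP, ← hD] at hr
    apply hν ⟨r, ?_⟩
    have : ν - P / D = 0 := by rw [hsub, h0, zero_div]
    have hνeq : ν = P / D := by linarith
    rw [hνeq, hr]
  have hED : E * D' ≤ 1 := by
    rw [div_le_div_iff₀ hDpos (by positivity)] at habs
    nlinarith
  refine ⟨hEpos, ?_⟩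
  rw [inv_eq_one_div, le_div_iff₀ hEpos]
  nlinarith

end Aux

/-- If `Ψ` is defined piecewise by `Ψ(Q) = |ν Qₙ - Pₙ|⁻¹` for `Qₙ ≤ Q < Q_{n+1}` and
`∑ₙ (log Q_{n+1}) / Qₙ^{1+1/α} = +∞`, then `∑_{Q=1}^∞ (log Ψ(Q)) / Q^{1+1/α} = +∞`. -/
theorem capacity_stmt6 (ν : ℝ) (hν : Irrational ν) (α : ℝ) (hα : 1 ≤ α)
    (Ψ : ℝ → ℝ)
    (hΨ : ∀ n : ℕ, ∀ Q : ℝ, cfDen ν n ≤ Q → Q < cfDen ν (n + 1) →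
      Ψ Q = |ν * cfDen ν n - cfNum ν n|⁻¹)
    (hdiv : ∑' n : ℕ,
      ENNReal.ofReal (Real.log (cfDen ν (n + 1)) / (cfDen ν n) ^ (1 + 1 / α)) = ⊤) :
    ∑' Q : ℕ,
      ENNReal.ofReal (Real.log (Ψ (Q + 1)) / ((Q : ℝ) + 1) ^ (1 + 1 / α)) = ⊤ := by
  set s : ℝ := 1 + 1 / α with hs
  set a : ℕ → ℝ≥0∞ := fun n =>
    ENNReal.ofReal (Real.log (cfDen ν (n + 1)) / (cfDen ν n) ^ s) with ha
  set g : ℕ → ℝ≥0∞ := fun Q =>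
    ENNReal.ofReal (Real.log (Ψ ((Q : ℝ) + 1)) / ((Q : ℝ) + 1) ^ s) with hg
  -- choose natural values of the denominators
  choose q hq using fun n => ((cf_dens_nat hν n).1 : ∃ k : ℕ, (GenContFract.of ν).dens n = k)
  have hq1 : ∀ n, 1 ≤ q n := by
    intro n
    have := cf_one_le_dens (ν := ν) n
    rw [hq n] at this
    exact_mod_cast this
  -- the injection
  set F : ℕ → ℕ := fun m => q (m + 1) - 1 with hF
  have hqmono : StrictMono fun m => q (m + 1) := by
    apply strictMono_nat_of_lt_succ
    intro m
    have := cf_dens_strict hν m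
    rw [hq (m + 1), hq (m + 2)] at this
    exact_mod_cast this
  have hFinj : Function.Injective F := by
    intro m m' h
    apply hqmono.injective
    simp only [hF] at h
    have h1 := hq1 (m + 1)
    have h2 := hq1 (m' + 1)
    simp only
    omega
  -- the tail sum diverges
  have htail : ∑' m : ℕ, a (m + 1) = ⊤ := by
    have h0 : ∑' n, a n = a 0 + ∑' m, a (m + 1) := tsum_eq_zero_add' ENNReal.summable
    rw [hdiv] at h0
    rcases ENNReal.add_eq_top.mp h0.symm with h | h
    · exact absurd h ENNReal.ofReal_ne_top
    · exact h
  -- pointwise bound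
  have hpoint : ∀ m : ℕ, a (m + 1) ≤ g (F m) := by
    intro m
    have hcast : ((F m : ℝ)) + 1 = cfDen ν (m + 1) := by
      have h1 := hq1 (m + 1)
      rw [hF]
      simp only
      rw [Nat.cast_sub h1]
      rw [cfDen, hq (m + 1)]
      push_cast
      ring
    have hΨval : Ψ ((F m : ℝ) + 1) = |ν * cfDen ν (m + 1) - cfNum ν (m + 1)|⁻¹ := by
      apply hΨ (m + 1)
      · rw [hcast]
      · rw [hcast]
        exact cf_dens_strict hν m
    have hkey := cf_key_bound hν (m + 1)
    have hd2 : (1 : ℝ) ≤ cfDen ν (m + 2) := cf_one_le_dens (m + 2)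
    have hd1 : (1 : ℝ) ≤ cfDen ν (m + 1) := cf_one_le_dens (m + 1)
    have hlog : Real.log (cfDen ν (m + 2)) ≤ Real.log (Ψ ((F m : ℝ) + 1)) := by
      rw [hΨval]
      exact Real.log_le_log (lt_of_lt_of_le one_pos hd2) hkey.2
    simp only [ha, hg]
    rw [hcast, show m + 1 + 1 = m + 2 from rfl] at hlog ⊢
    apply ENNReal.ofReal_le_ofReal
    exact div_le_div_of_nonneg_right hlog
      (Real.rpow_pos_of_pos (lt_of_lt_of_le one_pos hd1) s).le
  -- conclude
  rw [eq_top_iff]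
  calc (⊤ : ℝ≥0∞) = ∑' m : ℕ, a (m + 1) := htail.symm
    _ ≤ ∑' m : ℕ, g (F m) := ENNReal.tsum_le_tsum hpoint
    _ ≤ ∑' Q : ℕ, g Q := ENNReal.tsum_comp_le_tsum_of_injective hFinj g
end
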